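/- Let p₀, …, p_k be an angle-monotone path of width 90°, i.e., all edge vectors p_{i+1} − p_i lie in a closed 90° wedge. Then the path is self-approaching toward p_k: for all indices i ≤ j, ‖p_k − p_j‖ ≤ ‖p_k − p_i‖; in fact, the Euclidean distance from any point on the path to p_k is non-increasing along the path. -/

import Mathlib

open Real

noncomputable section

/-- Euclidean dot product of two plane vectors (represented as complex numbers). -/
def dot2 (u v : ℂ) : ℝ := u.re * v.re + u.im * v.im

open scoped InnerProductSpace

/-!
Every vector of a `45°` wedge around a unit vector `d` makes an angle of at most `45°` with
`d`, so by the triangle inequality for angles any two of them make an angle of at most `90°`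
and have nonnegative inner product. The wedge is closed under addition, so the remaining
part `p k - p (m + 1)` of the path lies in it as well as the edge `p (m + 1) - p m`; their
inner product is therefore nonnegative, and expanding the square of the norm of the sum gives
`‖p k - p (m + 1)‖ ≤ ‖p k - p m‖`.
-/

lemma dot2_eq_inner (u v : ℂ) : dot2 u v = ⟪u, v⟫_ℝ := by
  rw [Complex.inner, dot2]
  simp only [Complex.mul_re, Complex.conj_re, Complex.conj_im]
  ring

section

open InnerProductGeometry

variable {E : Type*} [NormedAddCommGroup E] [InnerProductSpace ℝ E]

lemma angle_le_of_norm_mul_cos_le_inner {d v : E} {θ : ℝ} (hd : ‖d‖ = 1) (hv : v ≠ 0)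
    (hθ : 0 ≤ θ) (h : ‖v‖ * cos θ ≤ ⟪v, d⟫_ℝ) : angle v d ≤ θ := by
  by_contra! hlt
  have hcos : cos (angle v d) < cos θ :=
    cos_lt_cos_of_nonneg_of_le_pi hθ (angle_le_pi v d) hlt
  have hinner : ⟪v, d⟫_ℝ = ‖v‖ * cos (angle v d) := by
    rw [← cos_angle_mul_norm_mul_norm, hd]
    ring
  have hnorm : 0 < ‖v‖ := norm_pos_iff.mpr hv
  nlinarith

lemma inner_nonneg_of_norm_mul_cos_pi_div_four_le_inner {d v w : E} (hd : ‖d‖ = 1)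
    (hv : ‖v‖ * cos (π / 4) ≤ ⟪v, d⟫_ℝ) (hw : ‖w‖ * cos (π / 4) ≤ ⟪w, d⟫_ℝ) :
    0 ≤ ⟪v, w⟫_ℝ := by
  rcases eq_or_ne v 0 with rfl | hv0
  · simp
  rcases eq_or_ne w 0 with rfl | hw0
  · simp
  have hvd := angle_le_of_norm_mul_cos_le_inner hd hv0 (by positivity) hv
  have hwd := angle_le_of_norm_mul_cos_le_inner hd hw0 (by positivity) hw
  have hvw : angle v w ≤ π / 2 := by
    linarith [angle_le_angle_add_angle v d w, angle_comm d w]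
  rw [← cos_angle_mul_norm_mul_norm]
  have hcos : 0 ≤ cos (angle v w) :=
    cos_nonneg_of_neg_pi_div_two_le_of_le (by linarith [angle_nonneg v w, pi_pos]) hvw
  positivity

lemma norm_add_mul_le_inner_add {d v w : E} {c : ℝ} (hc : 0 ≤ c)
    (hv : ‖v‖ * c ≤ ⟪v, d⟫_ℝ) (hw : ‖w‖ * c ≤ ⟪w, d⟫_ℝ) : ‖v + w‖ * c ≤ ⟪v + w, d⟫_ℝ :=
  calc ‖v + w‖ * c ≤ (‖v‖ + ‖w‖) * c := by gcongr; exact norm_add_le v w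
    _ ≤ ⟪v + w, d⟫_ℝ := by rw [inner_add_left]; linarith

lemma norm_le_norm_add_of_inner_nonneg {v w : E} (h : 0 ≤ ⟪v, w⟫_ℝ) : ‖v‖ ≤ ‖v + w‖ := by
  refine le_of_sq_le_sq ?_ (norm_nonneg _)
  rw [norm_add_sq_real]
  nlinarith [sq_nonneg ‖w‖]

lemma norm_sub_mul_le_inner_sub_of_edges {p : ℕ → E} {d : E} {c : ℝ} {k : ℕ} (hc : 0 ≤ c)
    (h : ∀ i < k, ‖p (i + 1) - p i‖ * c ≤ ⟪p (i + 1) - p i, d⟫_ℝ) {i j : ℕ} (hij : i ≤ j)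
    (hjk : j ≤ k) : ‖p j - p i‖ * c ≤ ⟪p j - p i, d⟫_ℝ := by
  induction j, hij using Nat.le_induction with
  | base => simp
  | succ j hij ih =>
    have hsplit : p (j + 1) - p i = (p (j + 1) - p j) + (p j - p i) := by abel
    rw [hsplit]
    exact norm_add_mul_le_inner_add hc (h j (by omega)) (ih (by omega))

theorem norm_sub_antitoneOn_of_edges_within_pi_div_four {p : ℕ → E} {d : E} {k : ℕ}
    (hd : ‖d‖ = 1) (h : ∀ i < k, ‖p (i + 1) - p i‖ * cos (π / 4) ≤ ⟪p (i + 1) - p i, d⟫_ℝ) :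
    AntitoneOn (fun j ↦ ‖p k - p j‖) (Set.Iic k) := by
  have hc : 0 ≤ cos (π / 4) := by rw [cos_pi_div_four]; positivity
  refine antitoneOn_of_add_one_le Set.ordConnected_Iic fun m _ _ hm ↦ ?_
  have hm : m + 1 ≤ k := hm
  have hsplit : p k - p m = (p k - p (m + 1)) + (p (m + 1) - p m) := by abel
  simp only [hsplit]
  exact norm_le_norm_add_of_inner_nonneg <|
    inner_nonneg_of_norm_mul_cos_pi_div_four_le_inner hd
      (norm_sub_mul_le_inner_sub_of_edges hc h hm le_rfl) (h m hm)

end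

/-- An angle-monotone path of width `90°` (all edge vectors within `45°`
of a common unit direction) is self-approaching toward its endpoint: the distance from
the vertices of the path to the final vertex `p k` is non-increasing along the path. -/
theorem angle_monotone_90_self_approaching (k : ℕ) (p : ℕ → ℂ)
    (h : ∃ d : ℂ, ‖d‖ = 1 ∧ ∀ i < k,
      ‖p (i + 1) - p i‖ * Real.cos (π / 4) ≤ dot2 (p (i + 1) - p i) d) :
    ∀ i j : ℕ, i ≤ j → j ≤ k → ‖p k - p j‖ ≤ ‖p k - p i‖ := by
  obtain ⟨d, hd, hedge⟩ := h
  simp only [dot2_eq_inner] at hedge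
  intro i j hij hjk
  exact norm_sub_antitoneOn_of_edges_within_pi_div_four hd hedge
    (Set.mem_Iic.mpr (hij.trans hjk)) (Set.mem_Iic.mpr hjk) hij
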